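/- Let p ∈ (0,1), x ∈ ℤ, x̃ = x + DLap(p), and f : ℤ → ℝ with finite second moments. Let g(y) = f(y) - (p/(1-p)²)(f(y+1) - 2f(y) + f(y-1)). Then E[(g(x̃) - f(x))²] ≤ 3·((1+p²)² + 2p)/(1-p)⁴ · E[(f(x̃) - f(x))²]. -/
import Mathlib

set_option maxHeartbeats 1000000

lemma dlap_zpow_abs_eq (p : ℝ) (i : ℤ) : p ^ |i| = p ^ i.natAbs := by
  rw [Int.abs_eq_natAbs]; exact zpow_natCast p i.natAbs

/-- Shift bound: summing a nonnegative sequence against the shifted weight costs at most `p⁻¹`. -/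
lemma dlap_shift_aux (p : ℝ) (hp0 : 0 < p) (hp1 : p < 1) (c : ℝ) (hc : 0 ≤ c)
    (b : ℤ → ℝ) (hb : ∀ i, 0 ≤ b i)
    (h : Summable fun i : ℤ => c * p ^ |i| * b i) (k : ℤ) (hk : k = 1 ∨ k = -1) :
    Summable (fun i : ℤ => c * p ^ |i| * b (i + k)) ∧
      ∑' i : ℤ, c * p ^ |i| * b (i + k) ≤ p⁻¹ * ∑' i : ℤ, c * p ^ |i| * b i := by
  have hzp : ∀ j : ℤ, (0:ℝ) ≤ p ^ |j| := fun j => (zpow_pos hp0 _).le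
  have h2 : ∀ i : ℤ, p ^ |i| ≤ p⁻¹ * p ^ |i + k| := by
    intro i
    have h1 : p * p ^ |i| ≤ p ^ |i + k| := by
      rw [dlap_zpow_abs_eq, dlap_zpow_abs_eq, ← pow_succ']
      exact pow_le_pow_of_le_one hp0.le hp1.le (by omega)
    rw [inv_mul_eq_div, le_div_iff₀ hp0]
    linarith [h1]
  have hple : ∀ i : ℤ, c * p ^ |i| * b (i + k) ≤ p⁻¹ * (c * p ^ |i + k| * b (i + k)) := by
    intro i
    calc c * p ^ |i| * b (i + k) = (c * b (i + k)) * p ^ |i| := by ring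
      _ ≤ (c * b (i + k)) * (p⁻¹ * p ^ |i + k|) :=
          mul_le_mul_of_nonneg_left (h2 i) (mul_nonneg hc (hb _))
      _ = p⁻¹ * (c * p ^ |i + k| * b (i + k)) := by ring
  have hshift : Summable (fun i : ℤ => p⁻¹ * (c * p ^ |i + k| * b (i + k))) :=
    (Equiv.addRight k).summable_iff.2 (h.mul_left p⁻¹)
  have hs : Summable (fun i : ℤ => c * p ^ |i| * b (i + k)) :=
    Summable.of_nonneg_of_le
      (fun i => mul_nonneg (mul_nonneg hc (hzp i)) (hb _)) hple hshift
  refine ⟨hs, ?_⟩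
  calc ∑' i : ℤ, c * p ^ |i| * b (i + k)
      ≤ ∑' i : ℤ, p⁻¹ * (c * p ^ |i + k| * b (i + k)) := Summable.tsum_le_tsum hple hs hshift
    _ = p⁻¹ * ∑' i : ℤ, c * p ^ |i + k| * b (i + k) := tsum_mul_left
    _ = p⁻¹ * ∑' i : ℤ, c * p ^ |i| * b i := by
        congr 1
        exact (Equiv.addRight k).tsum_eq (fun j : ℤ => c * p ^ |j| * b j)

/-- Univariate MSE bound for the unbiased estimator:
`MSE_g(x) ≤ 3((1+p²)² + 2p)/(1-p)⁴ · MSE_f(x)`. -/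
theorem discrete_laplace_mse_bound_univariate
    (p : ℝ) (hp0 : 0 < p) (hp1 : p < 1) (x : ℤ) (f : ℤ → ℝ)
    (g : ℤ → ℝ)
    (hg : ∀ y : ℤ, g y =
      f y - p / (1 - p) ^ 2 * (f (y + 1) - 2 * f y + f (y - 1)))
    (hsum : Summable fun i : ℤ =>
      (1 - p) / (1 + p) * p ^ |i| * (f (x + i) - f x) ^ 2) :
    (Summable fun i : ℤ =>
        (1 - p) / (1 + p) * p ^ |i| * (g (x + i) - f x) ^ 2) ∧
      (∑' i : ℤ, (1 - p) / (1 + p) * p ^ |i| * (g (x + i) - f x) ^ 2) ≤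
        3 * ((1 + p ^ 2) ^ 2 + 2 * p) / (1 - p) ^ 4 *
          ∑' i : ℤ, (1 - p) / (1 + p) * p ^ |i| * (f (x + i) - f x) ^ 2 := by
  have h1p : (0:ℝ) < 1 - p := by linarith
  have h1p' : (0:ℝ) < 1 + p := by linarith
  have hc : (0:ℝ) ≤ (1 - p) / (1 + p) := div_nonneg h1p.le h1p'.le
  set q : ℝ := p / (1 - p) ^ 2 with hqdef
  have Hp := dlap_shift_aux p hp0 hp1 ((1 - p) / (1 + p)) hc
    (fun i => (f (x + i) - f x) ^ 2) (fun i => sq_nonneg _) hsum 1 (Or.inl rfl)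
  have Hm := dlap_shift_aux p hp0 hp1 ((1 - p) / (1 + p)) hc
    (fun i => (f (x + i) - f x) ^ 2) (fun i => sq_nonneg _) hsum (-1) (Or.inr rfl)
  have hgi : ∀ i : ℤ, g (x + i) - f x =
      (1 + 2 * q) * (f (x + i) - f x) - q * (f (x + (i + 1)) - f x)
        - q * (f (x + (i + -1)) - f x) := by
    intro i
    rw [hg (x + i), show x + i + 1 = x + (i + 1) by ring,
      show x + i - 1 = x + (i + -1) by ring]
    ring
  have hpt : ∀ i : ℤ, (1 - p) / (1 + p) * p ^ |i| * (g (x + i) - f x) ^ 2 ≤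
      3 * (1 + 2 * q) ^ 2 * ((1 - p) / (1 + p) * p ^ |i| * (f (x + i) - f x) ^ 2)
      + 3 * q ^ 2 * ((1 - p) / (1 + p) * p ^ |i| * (f (x + (i + 1)) - f x) ^ 2)
      + 3 * q ^ 2 * ((1 - p) / (1 + p) * p ^ |i| * (f (x + (i + -1)) - f x) ^ 2) := by
    intro i
    have hw : (0:ℝ) ≤ (1 - p) / (1 + p) * p ^ |i| :=
      mul_nonneg hc (zpow_pos hp0 _).le
    rw [hgi i]
    set u := f (x + i) - f x
    set v := f (x + (i + 1)) - f x
    set t := f (x + (i + -1)) - f x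
    have key : ((1 + 2 * q) * u - q * v - q * t) ^ 2 ≤
        3 * (1 + 2 * q) ^ 2 * u ^ 2 + 3 * q ^ 2 * v ^ 2 + 3 * q ^ 2 * t ^ 2 := by
      nlinarith [sq_nonneg ((1 + 2 * q) * u + q * v), sq_nonneg ((1 + 2 * q) * u + q * t),
        sq_nonneg (q * v - q * t)]
    calc (1 - p) / (1 + p) * p ^ |i| * ((1 + 2 * q) * u - q * v - q * t) ^ 2
        ≤ (1 - p) / (1 + p) * p ^ |i| *
            (3 * (1 + 2 * q) ^ 2 * u ^ 2 + 3 * q ^ 2 * v ^ 2 + 3 * q ^ 2 * t ^ 2) :=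
          mul_le_mul_of_nonneg_left key hw
      _ = 3 * (1 + 2 * q) ^ 2 * ((1 - p) / (1 + p) * p ^ |i| * u ^ 2)
          + 3 * q ^ 2 * ((1 - p) / (1 + p) * p ^ |i| * v ^ 2)
          + 3 * q ^ 2 * ((1 - p) / (1 + p) * p ^ |i| * t ^ 2) := by ring
  have hRHSsum : Summable (fun i : ℤ =>
      3 * (1 + 2 * q) ^ 2 * ((1 - p) / (1 + p) * p ^ |i| * (f (x + i) - f x) ^ 2)
      + 3 * q ^ 2 * ((1 - p) / (1 + p) * p ^ |i| * (f (x + (i + 1)) - f x) ^ 2)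
      + 3 * q ^ 2 * ((1 - p) / (1 + p) * p ^ |i| * (f (x + (i + -1)) - f x) ^ 2)) :=
    ((hsum.mul_left _).add (Hp.1.mul_left _)).add (Hm.1.mul_left _)
  have hLs : Summable (fun i : ℤ =>
      (1 - p) / (1 + p) * p ^ |i| * (g (x + i) - f x) ^ 2) :=
    Summable.of_nonneg_of_le
      (fun i => mul_nonneg (mul_nonneg hc (zpow_pos hp0 _).le) (sq_nonneg _))
      hpt hRHSsum
  refine ⟨hLs, ?_⟩
  have hco : 3 * (1 + 2 * q) ^ 2 + 3 * q ^ 2 * p⁻¹ + 3 * q ^ 2 * p⁻¹ =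
      3 * ((1 + p ^ 2) ^ 2 + 2 * p) / (1 - p) ^ 4 := by
    rw [hqdef]; field_simp; ring
  calc ∑' i : ℤ, (1 - p) / (1 + p) * p ^ |i| * (g (x + i) - f x) ^ 2
      ≤ ∑' i : ℤ,
        (3 * (1 + 2 * q) ^ 2 * ((1 - p) / (1 + p) * p ^ |i| * (f (x + i) - f x) ^ 2)
        + 3 * q ^ 2 * ((1 - p) / (1 + p) * p ^ |i| * (f (x + (i + 1)) - f x) ^ 2)
        + 3 * q ^ 2 * ((1 - p) / (1 + p) * p ^ |i| * (f (x + (i + -1)) - f x) ^ 2)) :=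
        Summable.tsum_le_tsum hpt hLs hRHSsum
    _ = 3 * (1 + 2 * q) ^ 2 *
          (∑' i : ℤ, (1 - p) / (1 + p) * p ^ |i| * (f (x + i) - f x) ^ 2)
        + 3 * q ^ 2 *
          (∑' i : ℤ, (1 - p) / (1 + p) * p ^ |i| * (f (x + (i + 1)) - f x) ^ 2)
        + 3 * q ^ 2 *
          (∑' i : ℤ, (1 - p) / (1 + p) * p ^ |i| * (f (x + (i + -1)) - f x) ^ 2) := by
        rw [Summable.tsum_add ((hsum.mul_left _).add (Hp.1.mul_left _)) (Hm.1.mul_left _),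
          Summable.tsum_add (hsum.mul_left _) (Hp.1.mul_left _),
          tsum_mul_left, tsum_mul_left, tsum_mul_left]
    _ ≤ 3 * (1 + 2 * q) ^ 2 *
          (∑' i : ℤ, (1 - p) / (1 + p) * p ^ |i| * (f (x + i) - f x) ^ 2)
        + 3 * q ^ 2 *
          (p⁻¹ * ∑' i : ℤ, (1 - p) / (1 + p) * p ^ |i| * (f (x + i) - f x) ^ 2)
        + 3 * q ^ 2 *
          (p⁻¹ * ∑' i : ℤ, (1 - p) / (1 + p) * p ^ |i| * (f (x + i) - f x) ^ 2) := by
        gcongr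
        · exact Hp.2
        · exact Hm.2
    _ = (3 * (1 + 2 * q) ^ 2 + 3 * q ^ 2 * p⁻¹ + 3 * q ^ 2 * p⁻¹) *
          ∑' i : ℤ, (1 - p) / (1 + p) * p ^ |i| * (f (x + i) - f x) ^ 2 := by ring
    _ = 3 * ((1 + p ^ 2) ^ 2 + 2 * p) / (1 - p) ^ 4 *
          ∑' i : ℤ, (1 - p) / (1 + p) * p ^ |i| * (f (x + i) - f x) ^ 2 := by rw [hco]
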